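/- Let G be a 2-connected planar simple graph with Δ(G) ≥ 5 that contains none of the configurations (A1)–(A4), and let H be a component of the graph obtained from G by deleting all vertices of degree 2. If u is a vertex of H with d(u) = 5 such that u has at least one neighbor in G of degree 4 and at least two neighbors in G of degree at most 5, then u has exactly 3 neighbors in H of H-degree at least 10 (n'_{10^+}(u) = 3). -/

import Mathlib

open SimpleGraph

/-- The degree of a vertex `v` of `G` (cardinality of its neighbor set). -/
noncomputable def deg {V : Type*} (G : SimpleGraph V) (v : V) : ℕ :=
  (G.neighborSet v).ncard

/-- The maximum degree `Δ(G)` of a finite graph `G`. -/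
noncomputable def maxDeg {V : Type*} [Fintype V] (G : SimpleGraph V) : ℕ :=
  Finset.univ.sup fun v => deg G v

/-- The number of neighbors of `u` in `G` whose degree is exactly `k`. -/
noncomputable def nDegEq {V : Type*} (G : SimpleGraph V) (u : V) (k : ℕ) : ℕ :=
  {w | w ∈ G.neighborSet u ∧ deg G w = k}.ncard

/-- The number of neighbors of `u` in `G` whose degree is at most `k`. -/
noncomputable def nDegLe {V : Type*} (G : SimpleGraph V) (u : V) (k : ℕ) : ℕ :=
  {w | w ∈ G.neighborSet u ∧ deg G w ≤ k}.ncard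

/-- The number of neighbors of `u` in `G` whose degree is at least `k`. -/
noncomputable def nDegGe {V : Type*} (G : SimpleGraph V) (u : V) (k : ℕ) : ℕ :=
  {w | w ∈ G.neighborSet u ∧ k ≤ deg G w}.ncard

/-- `H` is a minor of `G`: there is a family of pairwise disjoint connected branch sets
indexed by the vertices of `H`, with an edge of `G` between the branch sets of any two
adjacent vertices of `H`. -/
def IsMinorOf {W V : Type*} (H : SimpleGraph W) (G : SimpleGraph V) : Prop :=
  ∃ φ : W → Set V,
    (∀ w, (G.induce (φ w)).Connected) ∧
    (∀ w₁ w₂, w₁ ≠ w₂ → Disjoint (φ w₁) (φ w₂)) ∧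
    ∀ ⦃w₁ w₂⦄, H.Adj w₁ w₂ → ∃ a ∈ φ w₁, ∃ b ∈ φ w₂, G.Adj a b

/-- A graph is planar iff it can be embedded in the plane; by Wagner's theorem this is
equivalent to having neither a `K₅` nor a `K₃,₃` minor. -/
def IsPlanar {V : Type*} (G : SimpleGraph V) : Prop :=
  ¬ IsMinorOf (completeGraph (Fin 5)) G ∧
  ¬ IsMinorOf (completeBipartiteGraph (Fin 3) (Fin 3)) G

/-- A graph is 2-connected: it has at least 3 vertices and deleting any single vertex
leaves a connected graph. -/
def TwoConnected {V : Type*} [Fintype V] (G : SimpleGraph V) : Prop :=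
  3 ≤ Fintype.card V ∧ ∀ v : V, (G.induce {w | w ≠ v}).Connected

/-- A proper edge coloring: distinct edges sharing a vertex get different colors. -/
def ProperEdgeColoring {V α : Type*} (G : SimpleGraph V) (c : Sym2 V → α) : Prop :=
  ∀ e₁ ∈ G.edgeSet, ∀ e₂ ∈ G.edgeSet, e₁ ≠ e₂ → (∃ v, v ∈ e₁ ∧ v ∈ e₂) → c e₁ ≠ c e₂

/-- An acyclic edge coloring: a proper edge coloring with no bichromatic cycle. -/
def AcyclicEdgeColoring {V α : Type*} (G : SimpleGraph V) (c : Sym2 V → α) : Prop :=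
  ProperEdgeColoring G c ∧
  ∀ (v : V) (w : G.Walk v v), w.IsCycle →
    ¬ ∃ i j : α, ∀ e ∈ w.edges, c e = i ∨ c e = j

/-- Configuration (A₁): a path `u v w` with `d(v) = 2` and `d(u) ≤ 9`. -/
def ConfigA1 {V : Type*} (G : SimpleGraph V) : Prop :=
  ∃ u v w : V, G.Adj u v ∧ G.Adj v w ∧ u ≠ w ∧ deg G v = 2 ∧ deg G u ≤ 9

/-- Configuration (A₂). -/
def ConfigA2 {V : Type*} (G : SimpleGraph V) : Prop :=
  ∃ u : V, 1 ≤ nDegEq G u 2 ∧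
    ((deg G u : ℤ) - 7 ≤ (nDegLe G u 8 : ℤ) ∨
     ((nDegLe G u 8 : ℤ) = (deg G u : ℤ) - 8 ∧ (deg G u : ℤ) - 9 ≤ (nDegEq G u 2 : ℤ)))

/-- Configuration (A₃). -/
def ConfigA3 {V : Type*} (G : SimpleGraph V) : Prop :=
  ∃ u v : V, G.Adj u v ∧ deg G u = 3 ∧
    (deg G v ≤ 8 ∨
     (deg G v = 9 ∧ ∃ w, G.Adj u w ∧ G.Adj v w) ∨
     (deg G v = 10 ∧ 5 ≤ nDegLe G v 5 ∧
       ∃ w₁ w₂, w₁ ≠ w₂ ∧ G.Adj u w₁ ∧ G.Adj v w₁ ∧ G.Adj u w₂ ∧ G.Adj v w₂))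

/-- Configuration (A₄). -/
def ConfigA4 {V : Type*} (G : SimpleGraph V) : Prop :=
  (∃ v u v₂ v₃ v₄ : V,
     deg G v = 4 ∧
     G.Adj v u ∧ G.Adj v v₂ ∧ G.Adj v v₃ ∧ G.Adj v v₄ ∧
     ([u, v₂, v₃, v₄] : List V).Pairwise (· ≠ ·) ∧
     deg G u ≤ deg G v₂ ∧ deg G v₂ ≤ deg G v₃ ∧ deg G v₃ ≤ deg G v₄ ∧
     4 ≤ deg G u ∧ deg G u ≤ 7 ∧ deg G u + deg G v₂ ≤ 17) ∨
  (∃ v u v₂ v₃ v₄ v₅ : V,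
     deg G v = 5 ∧
     G.Adj v u ∧ G.Adj v v₂ ∧ G.Adj v v₃ ∧ G.Adj v v₄ ∧ G.Adj v v₅ ∧
     ([u, v₂, v₃, v₄, v₅] : List V).Pairwise (· ≠ ·) ∧
     deg G u ≤ deg G v₂ ∧ deg G v₂ ≤ deg G v₃ ∧ deg G v₃ ≤ deg G v₄ ∧
       deg G v₄ ≤ deg G v₅ ∧
     ((4 ≤ deg G u ∧ deg G u ≤ 6 ∧ deg G u + deg G v₂ + deg G v₃ ≤ 18) ∨
      (deg G u = 6 ∧ deg G v₂ = 6 ∧ deg G v₃ = 7 ∧ deg G v₄ = 7 ∧ deg G v₅ = 7 ∧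
        G.Adj u v₅)))

/-! Every neighbour of `u` has degree at least 4: degree 1 is excluded by 2-connectedness,
degree 2 by (A1) and degree 3 by (A3.1). Listing the five neighbours by increasing degree, the
first has degree 4 and the second at most 5, so (A4.2) forces the other three to have degree at
least 10. Deleting the 2-vertices keeps these three at H-degree at least 10: `u` is a neighbour
of degree at most 8 and not 2, so excluding (A2) leaves room for at most `d(x) - 10` neighbours
of degree 2. -/

lemma Set.Finite.exists_nodup_pairwise_le {α : Type*} {s : Set α} (hs : s.Finite)
    (f : α → ℕ) :
    ∃ l : List α, l.Nodup ∧ (∀ x, x ∈ l ↔ x ∈ s) ∧ l.Pairwise (fun a b => f a ≤ f b) := by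
  have hperm := List.mergeSort_perm hs.toFinset.toList (fun a b => f a ≤ f b)
  refine ⟨_, hperm.nodup_iff.2 (Finset.nodup_toList _), fun x => by simp [hperm.mem_iff], ?_⟩
  simpa using List.pairwise_mergeSort (le := fun a b => decide (f a ≤ f b))
    (fun a b c hab hbc => by simp only [decide_eq_true_eq] at *; omega)
    (fun a b => by simp only [Bool.or_eq_true, decide_eq_true_eq]; omega) hs.toFinset.toList

lemma List.Pairwise.le_of_mem_cons {α : Type*} {f : α → ℕ} {a x : α} {l : List α}
    (h : (a :: l).Pairwise (fun a b => f a ≤ f b)) (hx : x ∈ a :: l) : f a ≤ f x := by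
  rcases List.mem_cons.1 hx with rfl | hx
  · exact le_rfl
  · exact List.rel_of_pairwise_cons h hx

section


variable {V : Type*} {G : SimpleGraph V}

lemma exists_sorted_neighbors_of_deg_eq_five [Finite V] {v : V} (hv : deg G v = 5) :
    ∃ w₁ w₂ w₃ w₄ w₅ : V, (∀ x, G.Adj v x ↔ x ∈ [w₁, w₂, w₃, w₄, w₅]) ∧
      [w₁, w₂, w₃, w₄, w₅].Nodup ∧
      [w₁, w₂, w₃, w₄, w₅].Pairwise (fun a b => deg G a ≤ deg G b) := by
  obtain ⟨l, hnd, hmem, hsort⟩ := (G.neighborSet v).toFinite.exists_nodup_pairwise_le (deg G)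
  have hlen : l.length = 5 := by
    classical
    rw [← List.toFinset_card_of_nodup hnd, ← hv, deg, ← Set.ncard_coe_finset]
    congr 1
    ext x
    simp [hmem]
  match l, hlen with
  | [w₁, w₂, w₃, w₄, w₅], _ => exact ⟨w₁, w₂, w₃, w₄, w₅, fun x => (hmem x).symm, hnd, hsort⟩

lemma TwoConnected.exists_adj_ne [Fintype V] (h : TwoConnected G) {v a : V} (hva : v ≠ a) :
    ∃ b, G.Adj v b ∧ b ≠ a := by
  classical
  obtain ⟨z, -, hz⟩ : ∃ z ∈ (Finset.univ : Finset V), z ∉ ({v, a} : Finset V) :=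
    Finset.exists_mem_notMem_of_card_lt_card (Finset.card_le_two.trans_lt h.1)
  simp only [Finset.mem_insert, Finset.mem_singleton, not_or] at hz
  obtain ⟨p⟩ := (h.2 a).preconnected ⟨v, hva⟩ ⟨z, hz.2⟩
  have hp : ¬ p.Nil := Walk.not_nil_of_ne fun hvz => hz.1 (congrArg Subtype.val hvz).symm
  exact ⟨p.snd, p.adj_snd hp, p.snd.2⟩

lemma TwoConnected.two_le_deg [Fintype V] (h : TwoConnected G) (v : V) : 2 ≤ deg G v := by
  obtain ⟨x, hx⟩ := Fintype.exists_ne_of_one_lt_card (by linarith [h.1]) v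
  obtain ⟨a, hva, -⟩ := h.exists_adj_ne hx.symm
  obtain ⟨b, hvb, hba⟩ := h.exists_adj_ne hva.ne
  calc 2 = ({a, b} : Set V).ncard := (Set.ncard_pair hba.symm).symm
    _ ≤ deg G v := Set.ncard_le_ncard (Set.pair_subset hva hvb) (Set.toFinite _)

lemma deg_induce (s : Set V) (x : s) : deg (G.induce s) x = (G.neighborSet x ∩ s).ncard := by
  rw [deg, ← Set.ncard_image_of_injective _ Subtype.val_injective]
  congr 1
  ext y
  constructor
  · rintro ⟨w, hw, rfl⟩
    exact ⟨hw, w.2⟩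
  · rintro ⟨hy, hys⟩
    exact ⟨⟨y, hys⟩, hy, rfl⟩

lemma ncard_neighborSet_induce_sep {s : Set V} {u : s} (hs : G.neighborSet u ⊆ s)
    {p : s → Prop} {q : V → Prop} (hpq : ∀ w : s, G.Adj u w → (p w ↔ q w)) :
    {w | w ∈ (G.induce s).neighborSet u ∧ p w}.ncard = {y | y ∈ G.neighborSet u ∧ q y}.ncard := by
  rw [← Set.ncard_image_of_injective _ Subtype.val_injective]
  congr 1
  ext y
  constructor
  · rintro ⟨w, ⟨hw, hp⟩, rfl⟩
    exact ⟨hw, (hpq w hw).1 hp⟩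
  · rintro ⟨hy, hq⟩
    exact ⟨⟨y, hs hy⟩, ⟨hy, (hpq ⟨y, hs hy⟩ hy).2 hq⟩, rfl⟩

lemma deg_induce_add_nDegEq_two [Finite V] (x : {v : V | deg G v ≠ 2}) :
    deg (G.induce {v | deg G v ≠ 2}) x + nDegEq G x 2 = deg G x := by
  rw [deg_induce, nDegEq, deg,
    ← Set.ncard_inter_add_ncard_sdiff_eq_ncard (G.neighborSet x) {v | deg G v ≠ 2}]
  congr 2
  ext y
  simp

lemma four_le_deg_of_adj [Fintype V] (h2 : TwoConnected G) (hA1 : ¬ ConfigA1 G)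
    (hA3 : ¬ ConfigA3 G) {u y : V} (huy : G.Adj u y) (hu : deg G u ≤ 8) : 4 ≤ deg G y := by
  have hy2 := h2.two_le_deg y
  by_contra! hy
  obtain hy | hy : deg G y = 2 ∨ deg G y = 3 := by omega
  · obtain ⟨w, hw, hwu⟩ := Set.exists_ne_of_one_lt_ncard (s := G.neighborSet y)
      (by rw [← deg]; omega) u
    exact hA1 ⟨u, y, w, huy, hw, hwu.symm, hy, by omega⟩
  · exact hA3 ⟨y, u, huy.symm, hy, Or.inl hu⟩

lemma nDegEq_two_add_ten_le [Finite V] (hA2 : ¬ ConfigA2 G) {x u : V} (hxu : G.Adj x u)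
    (hu8 : deg G u ≤ 8) (hu2 : deg G u ≠ 2) (hx : 1 ≤ nDegEq G x 2) :
    nDegEq G x 2 + 10 ≤ deg G x := by
  have hlt : nDegEq G x 2 < nDegLe G x 8 := by
    refine Set.ncard_lt_ncard ((Set.ssubset_iff_of_subset ?_).2 ⟨u, ⟨hxu, hu8⟩, ?_⟩)
      (Set.toFinite _)
    · exact fun w hw => ⟨hw.1, hw.2.le.trans (by norm_num)⟩
    · exact fun h => hu2 h.2
  have hA2x : ¬ (_ ∨ _) := fun h => hA2 ⟨x, hx, h⟩
  push Not at hA2x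
  omega

lemma ten_le_deg_induce_iff [Finite V] (hA2 : ¬ ConfigA2 G) {u : V}
    {x : {v : V | deg G v ≠ 2}} (hxu : G.Adj x u) (hu8 : deg G u ≤ 8) (hu2 : deg G u ≠ 2) :
    10 ≤ deg (G.induce {v | deg G v ≠ 2}) x ↔ 10 ≤ deg G x := by
  have hsum := deg_induce_add_nDegEq_two x
  refine ⟨fun h => by omega, fun hx => ?_⟩
  rcases Nat.eq_zero_or_pos (nDegEq G x 2) with h0 | h0
  · omega
  · have := nDegEq_two_add_ten_le hA2 hxu hu8 hu2 h0
    omega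

lemma nDegGe_ten_eq_three_of_deg_eq_five [Fintype V] (h2 : TwoConnected G)
    (hA1 : ¬ ConfigA1 G) (hA3 : ¬ ConfigA3 G) (hA4 : ¬ ConfigA4 G)
    {u : V} (hu5 : deg G u = 5) (h4 : 1 ≤ nDegEq G u 4) (h5 : 2 ≤ nDegLe G u 5) :
    nDegGe G u 10 = 3 := by
  obtain ⟨w₁, w₂, w₃, w₄, w₅, hN, hnd, hsort⟩ := exists_sorted_neighbors_of_deg_eq_five hu5
  have hd1 : deg G w₁ ≤ 4 := by
    obtain ⟨p, hp, hp4⟩ := Set.nonempty_of_ncard_ne_zero (Nat.one_le_iff_ne_zero.1 h4)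
    exact hp4 ▸ hsort.le_of_mem_cons ((hN p).1 hp)
  have hd2 : deg G w₂ ≤ 5 := by
    obtain ⟨p, ⟨hp, hp5⟩, hpw⟩ := Set.exists_ne_of_one_lt_ncard h5 w₁
    have hp' : p ∈ [w₂, w₃, w₄, w₅] := by simpa [hpw] using (hN p).1 hp
    exact (hsort.of_cons.le_of_mem_cons hp').trans hp5
  have hadj : ∀ x ∈ [w₁, w₂, w₃, w₄, w₅], G.Adj u x := fun x hx => (hN x).2 hx
  simp only [List.mem_cons, List.not_mem_nil, forall_eq_or_imp, or_false, forall_eq] at hadj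
  have hmin : 4 ≤ deg G w₁ := four_le_deg_of_adj h2 hA1 hA3 hadj.1 (by omega)
  simp only [List.pairwise_cons, List.mem_cons, List.not_mem_nil, forall_eq_or_imp, or_false,
    forall_eq, List.Pairwise.nil] at hsort
  obtain ⟨⟨h12, -⟩, ⟨h23, -⟩, ⟨h34, -⟩, h45, -⟩ := hsort
  have hd3 : 10 ≤ deg G w₃ := by
    by_contra! h
    exact hA4 (Or.inr ⟨u, w₁, w₂, w₃, w₄, w₅, hu5, hadj.1, hadj.2.1, hadj.2.2.1, hadj.2.2.2.1,
      hadj.2.2.2.2, hnd, h12, h23, h34, h45,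
      Or.inl ⟨hmin, by omega, by omega⟩⟩)
  have hset : {w | w ∈ G.neighborSet u ∧ 10 ≤ deg G w} = {w₃, w₄, w₅} := by
    ext x
    simp only [Set.mem_ofPred_eq, mem_neighborSet, hN, List.mem_cons, List.not_mem_nil,
      or_false, Set.mem_insert_iff, Set.mem_singleton_iff]
    constructor
    · rintro ⟨rfl | rfl | h, hx⟩
      · omega
      · omega
      · exact h
    · rintro (rfl | rfl | rfl) <;> simp only [true_or, or_true, true_and] <;> omega
  simp only [List.nodup_cons, List.mem_cons, List.not_mem_nil, not_or, or_false,
    List.nodup_nil, not_false_eq_true, and_true] at hnd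
  obtain ⟨-, -, ⟨n34, n35⟩, n45⟩ := hnd
  rw [nDegGe, hset, Set.ncard_eq_three]
  exact ⟨w₃, w₄, w₅, n34, n35, n45, rfl⟩

end

theorem claim_five_vertex_general {V : Type*} [Fintype V] (G : SimpleGraph V)
    (h2 : TwoConnected G)
    (hA1 : ¬ ConfigA1 G) (hA2 : ¬ ConfigA2 G) (hA3 : ¬ ConfigA3 G) (hA4 : ¬ ConfigA4 G) :
    ∀ u : ↥{v : V | deg G v ≠ 2}, deg G ↑u = 5 →
      1 ≤ nDegEq G ↑u 4 → 2 ≤ nDegLe G ↑u 5 →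
      {w | w ∈ (G.induce {v : V | deg G v ≠ 2}).neighborSet u ∧
        10 ≤ deg (G.induce {v : V | deg G v ≠ 2}) w}.ncard = 3 := by
  intro u hu5 h4 h5
  have hnbr : ∀ y, G.Adj u y → 4 ≤ deg G y :=
    fun y hy => four_le_deg_of_adj h2 hA1 hA3 hy (by omega)
  rw [ncard_neighborSet_induce_sep (p := fun w => 10 ≤ deg (G.induce _) w)
    (q := fun y => 10 ≤ deg G y)]
  · exact nDegGe_ten_eq_three_of_deg_eq_five h2 hA1 hA3 hA4 hu5 h4 h5
  · intro y hy
    have := hnbr y hy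
    simp only [Set.mem_ofPred_eq]
    omega
  · exact fun w hw => ten_le_deg_induce_iff hA2 hw.symm (by omega) (by omega)

theorem claim_five_vertex {V : Type*} [Fintype V] (G : SimpleGraph V)
    (h2 : TwoConnected G) (hplanar : IsPlanar G) (hΔ : 5 ≤ maxDeg G)
    (hA1 : ¬ ConfigA1 G) (hA2 : ¬ ConfigA2 G) (hA3 : ¬ ConfigA3 G) (hA4 : ¬ ConfigA4 G) :
    ∀ u : ↥{v : V | deg G v ≠ 2}, deg G ↑u = 5 →
      1 ≤ nDegEq G ↑u 4 → 2 ≤ nDegLe G ↑u 5 →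
      {w | w ∈ (G.induce {v : V | deg G v ≠ 2}).neighborSet u ∧
        10 ≤ deg (G.induce {v : V | deg G v ≠ 2}) w}.ncard = 3 :=
  claim_five_vertex_general G h2 hA1 hA2 hA3 hA4
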